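/- arXiv:2301.11269 — 4 statements merged into one kernel-verified Lean document; each statement's English description precedes it below -/
import Mathlib

section
/- Let N_m : X → ℝ with N_m(x) ≥ 0 and D_m : X → ℝ with D_m(x) > 0 for all x ∈ X, m = 1, …, M. Define F(x) = Σ_m N_m(x)/D_m(x) and g(x, y) = Σ_m (2 y_m √(N_m(x)) − y_m² D_m(x)). Then for every x ∈ X, F(x) = max_{y ∈ ℝ^M} g(x, y), and this maximum is attained at y_m = √(N_m(x))/D_m(x). -/
/-! Each summand is a concave quadratic in `y m`; completing the square,
`N / D - (2 y √N - y² D) = (y D - √N)² / D ≥ 0`, with equality exactly at `y = √N / D`. -/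

theorem two_mul_mul_sub_sq_mul_le_sq_div {d : ℝ} (hd : 0 < d) (a y : ℝ) :
    2 * y * a - y ^ 2 * d ≤ a ^ 2 / d := by
  have hsquare : a ^ 2 / d - (2 * y * a - y ^ 2 * d) = (y * d - a) ^ 2 / d := by
    field_simp
    ring
  have : 0 ≤ (y * d - a) ^ 2 / d := by positivity
  linarith

theorem two_mul_div_mul_sub_div_sq_mul {d : ℝ} (hd : d ≠ 0) (a : ℝ) :
    2 * (a / d) * a - (a / d) ^ 2 * d = a ^ 2 / d := by
  field_simp
  ring

theorem quadratic_transform_sup_general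
    (n M : ℕ) (X : Set (Fin n → ℝ))
    (N D : Fin M → (Fin n → ℝ) → ℝ)
    (hN : ∀ m, ∀ x ∈ X, 0 ≤ N m x) (hD : ∀ m, ∀ x ∈ X, 0 < D m x) :
    ∀ x ∈ X,
      (∀ y : Fin M → ℝ,
        ∑ m, (2 * y m * Real.sqrt (N m x) - (y m) ^ 2 * D m x) ≤
        ∑ m, N m x / D m x) ∧
      ∑ m, (2 * (Real.sqrt (N m x) / D m x) * Real.sqrt (N m x)
            - (Real.sqrt (N m x) / D m x) ^ 2 * D m x) =
        ∑ m, N m x / D m x := by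
  intro x hx
  have hsq (m : Fin M) : Real.sqrt (N m x) ^ 2 = N m x := Real.sq_sqrt (hN m x hx)
  refine ⟨fun y => Finset.sum_le_sum fun m _ => ?_, Finset.sum_congr rfl fun m _ => ?_⟩
  · simpa only [hsq] using
      two_mul_mul_sub_sq_mul_le_sq_div (hD m x hx) (Real.sqrt (N m x)) (y m)
  · rw [two_mul_div_mul_sub_div_sq_mul (hD m x hx).ne', hsq]

theorem quadratic_transform_sup
    (n M : ℕ) (X : Set (Fin n → ℝ)) (hne : X.Nonempty)
    (N D : Fin M → (Fin n → ℝ) → ℝ)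
    (hN : ∀ m, ∀ x ∈ X, 0 ≤ N m x) (hD : ∀ m, ∀ x ∈ X, 0 < D m x) :
    ∀ x ∈ X,
      (∀ y : Fin M → ℝ,
        ∑ m, (2 * y m * Real.sqrt (N m x) - (y m) ^ 2 * D m x) ≤
        ∑ m, N m x / D m x) ∧
      ∑ m, (2 * (Real.sqrt (N m x) / D m x) * Real.sqrt (N m x)
            - (Real.sqrt (N m x) / D m x) ^ 2 * D m x) =
        ∑ m, N m x / D m x :=
  quadratic_transform_sup_general n M X N D hN hD
end

section
/- (Equivalence of the sum-of-ratios problem and its quadratic transform) Suppose (x*, y*) maximizes g(x, y) = Σ_m (2 y_m √(N_m(x)) − y_m² D_m(x)) over X × ℝ^M. Then x* maximizes F(x) = Σ_m N_m(x)/D_m(x) over X and y*_m = √(N_m(x*))/D_m(x*) for each m. -/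
theorem quadratic_transform_equiv_forward
    (n M : ℕ) (X : Set (Fin n → ℝ)) (hne : X.Nonempty)
    (N D : Fin M → (Fin n → ℝ) → ℝ)
    (hN : ∀ m, ∀ x ∈ X, 0 ≤ N m x) (hD : ∀ m, ∀ x ∈ X, 0 < D m x)
    (xstar : Fin n → ℝ) (hxstar : xstar ∈ X) (ystar : Fin M → ℝ)
    (hmax : ∀ x ∈ X, ∀ y : Fin M → ℝ,
      ∑ m, (2 * y m * Real.sqrt (N m x) - (y m) ^ 2 * D m x) ≤
      ∑ m, (2 * ystar m * Real.sqrt (N m xstar) - (ystar m) ^ 2 * D m xstar)) :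
    (∀ x ∈ X, ∑ m, N m x / D m x ≤ ∑ m, N m xstar / D m xstar) ∧
    (∀ m, ystar m = Real.sqrt (N m xstar) / D m xstar) := by
  have key : ∀ m, ∀ x ∈ X, ∀ y : ℝ,
      2 * y * Real.sqrt (N m x) - y ^ 2 * D m x
        = N m x / D m x - D m x * (y - Real.sqrt (N m x) / D m x) ^ 2 := by
    intro m x hx y
    have hd := hD m x hx
    have hs : Real.sqrt (N m x) ^ 2 = N m x := Real.sq_sqrt (hN m x hx)
    field_simp
    nlinarith [hs]
  -- for any x, plugging the optimal y gives the ratio sum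
  have opt : ∀ x ∈ X,
      ∑ m, (2 * (Real.sqrt (N m x) / D m x) * Real.sqrt (N m x)
        - (Real.sqrt (N m x) / D m x) ^ 2 * D m x) = ∑ m, N m x / D m x := by
    intro x hx
    refine Finset.sum_congr rfl fun m _ => ?_
    rw [key m x hx]
    ring
  -- lower bound: ratio sum at any x ≤ value at (x*, y*)
  have lower : ∀ x ∈ X, ∑ m, N m x / D m x ≤
      ∑ m, (2 * ystar m * Real.sqrt (N m xstar) - (ystar m) ^ 2 * D m xstar) := by
    intro x hx
    rw [← opt x hx]
    exact hmax x hx _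
  -- upper bound
  have upper : ∑ m, (2 * ystar m * Real.sqrt (N m xstar) - (ystar m) ^ 2 * D m xstar)
      ≤ ∑ m, N m xstar / D m xstar := by
    refine Finset.sum_le_sum fun m _ => ?_
    rw [key m xstar hxstar]
    nlinarith [mul_nonneg (hD m xstar hxstar).le
      (sq_nonneg (ystar m - Real.sqrt (N m xstar) / D m xstar))]
  constructor
  · intro x hx
    exact (lower x hx).trans upper
  · have heq : ∑ m, (2 * ystar m * Real.sqrt (N m xstar) - (ystar m) ^ 2 * D m xstar)
        = ∑ m, N m xstar / D m xstar :=
      le_antisymm upper (lower xstar hxstar)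
    have hzero : ∑ m, D m xstar * (ystar m - Real.sqrt (N m xstar) / D m xstar) ^ 2 = 0 := by
      have : ∑ m, (N m xstar / D m xstar
          - (2 * ystar m * Real.sqrt (N m xstar) - (ystar m) ^ 2 * D m xstar)) = 0 := by
        rw [Finset.sum_sub_distrib, heq, sub_self]
      rw [← this]
      refine Finset.sum_congr rfl fun m _ => ?_
      rw [key m xstar hxstar]
      ring
    intro m
    have h0 : D m xstar * (ystar m - Real.sqrt (N m xstar) / D m xstar) ^ 2 = 0 := by
      have := Finset.sum_eq_zero_iff_of_nonneg (fun i _ =>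
        mul_nonneg (hD i xstar hxstar).le (sq_nonneg _)) |>.mp hzero m (Finset.mem_univ m)
      exact this
    have hd := hD m xstar hxstar
    have : (ystar m - Real.sqrt (N m xstar) / D m xstar) ^ 2 = 0 := by
      rcases mul_eq_zero.mp h0 with h | h
      · exact absurd h hd.ne'
      · exact h
    have := pow_eq_zero_iff (n := 2) (by norm_num) |>.mp this
    linarith
end

section
/- Conversely, if x* maximizes F(x) = Σ_m N_m(x)/D_m(x) over X and y*_m = √(N_m(x*))/D_m(x*), then (x*, y*) maximizes g(x, y) = Σ_m (2 y_m √(N_m(x)) − y_m² D_m(x)) over X × ℝ^M. -/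
/-! For fixed `x` the function `y ↦ 2 y √N - y² D` is a concave quadratic maximized at
`y = √N / D` with maximum value `N / D`, because `N / D - (2 y √N - y² D) = (√N - y D)² / D`.
So `g(x, y) ≤ F(x) ≤ F(x*) = g(x*, y*)`. -/

namespace Real

theorem two_mul_mul_sub_sq_mul_le_sq_div {s d : ℝ} (y : ℝ) (hd : 0 < d) :
    2 * y * s - y ^ 2 * d ≤ s ^ 2 / d := by
  have hgap : s ^ 2 / d - (2 * y * s - y ^ 2 * d) = (s - y * d) ^ 2 / d := by
    field_simp
    ring
  have : 0 ≤ (s - y * d) ^ 2 / d := by positivity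
  linarith

theorem two_mul_div_mul_sub_div_sq_mul (s : ℝ) {d : ℝ} (hd : d ≠ 0) :
    2 * (s / d) * s - (s / d) ^ 2 * d = s ^ 2 / d := by
  field_simp
  ring

theorem two_mul_mul_sqrt_sub_sq_mul_le_div {a d : ℝ} (y : ℝ) (ha : 0 ≤ a) (hd : 0 < d) :
    2 * y * √a - y ^ 2 * d ≤ a / d := by
  simpa only [sq_sqrt ha] using two_mul_mul_sub_sq_mul_le_sq_div (s := √a) y hd

theorem two_mul_div_mul_sqrt_sub_div_sq_mul {a d : ℝ} (ha : 0 ≤ a) (hd : d ≠ 0) :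
    2 * (√a / d) * √a - (√a / d) ^ 2 * d = a / d := by
  rw [two_mul_div_mul_sub_div_sq_mul _ hd, sq_sqrt ha]

end Real

theorem quadratic_transform_equiv_backward_general
    (n M : ℕ) (X : Set (Fin n → ℝ))
    (N D : Fin M → (Fin n → ℝ) → ℝ)
    (hN : ∀ m, ∀ x ∈ X, 0 ≤ N m x) (hD : ∀ m, ∀ x ∈ X, 0 < D m x)
    (xstar : Fin n → ℝ) (hxstar : xstar ∈ X)
    (hmaxF : ∀ x ∈ X, ∑ m, N m x / D m x ≤ ∑ m, N m xstar / D m xstar)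
    (ystar : Fin M → ℝ)
    (hystar : ∀ m, ystar m = Real.sqrt (N m xstar) / D m xstar) :
    ∀ x ∈ X, ∀ y : Fin M → ℝ,
      ∑ m, (2 * y m * Real.sqrt (N m x) - (y m) ^ 2 * D m x) ≤
      ∑ m, (2 * ystar m * Real.sqrt (N m xstar) - (ystar m) ^ 2 * D m xstar) := by
  intro x hx y
  calc ∑ m, (2 * y m * Real.sqrt (N m x) - (y m) ^ 2 * D m x)
      ≤ ∑ m, N m x / D m x := Finset.sum_le_sum fun m _ ↦
        Real.two_mul_mul_sqrt_sub_sq_mul_le_div (y m) (hN m x hx) (hD m x hx)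
    _ ≤ ∑ m, N m xstar / D m xstar := hmaxF x hx
    _ = ∑ m, (2 * ystar m * Real.sqrt (N m xstar) - (ystar m) ^ 2 * D m xstar) :=
        Finset.sum_congr rfl fun m _ ↦ by
          rw [hystar m, Real.two_mul_div_mul_sqrt_sub_div_sq_mul (hN m xstar hxstar)
            (hD m xstar hxstar).ne']

theorem quadratic_transform_equiv_backward
    (n M : ℕ) (X : Set (Fin n → ℝ)) (hne : X.Nonempty)
    (N D : Fin M → (Fin n → ℝ) → ℝ)
    (hN : ∀ m, ∀ x ∈ X, 0 ≤ N m x) (hD : ∀ m, ∀ x ∈ X, 0 < D m x)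
    (xstar : Fin n → ℝ) (hxstar : xstar ∈ X)
    (hmaxF : ∀ x ∈ X, ∑ m, N m x / D m x ≤ ∑ m, N m xstar / D m xstar)
    (ystar : Fin M → ℝ)
    (hystar : ∀ m, ystar m = Real.sqrt (N m xstar) / D m xstar) :
    ∀ x ∈ X, ∀ y : Fin M → ℝ,
      ∑ m, (2 * y m * Real.sqrt (N m x) - (y m) ^ 2 * D m x) ≤
      ∑ m, (2 * ystar m * Real.sqrt (N m xstar) - (ystar m) ^ 2 * D m xstar) :=
  quadratic_transform_equiv_backward_general n M X N D hN hD xstar hxstar hmaxF ystar hystar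
end

section
/- Let Q be an invertible totally nonnegative n×n symmetric positive definite matrix with LDLᵀ decomposition Q = L D Lᵀ where L is unit lower triangular and D diagonal with positive entries. Then all entries of L are nonnegative, and hence for every x ∈ ℝⁿ with nonnegative entries, ⟨ℓ_m, x⟩ ≥ 0 for each column ℓ_m of L. -/
open Matrix Finset

theorem tn_ldlt_nonneg
    (n : ℕ) (Q L D : Matrix (Fin n) (Fin n) ℝ)
    (hQsymm : Q.IsSymm) (hQpd : Q.PosDef)
    (hTN : ∀ (k : ℕ) (r c : Fin k → Fin n), StrictMono r → StrictMono c →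
      0 ≤ (Q.submatrix r c).det)
    (hL : L.BlockTriangular OrderDual.toDual)
    (hLdiag : ∀ i, L i i = 1)
    (hD : D.IsDiag) (hDpos : ∀ i, 0 < D i i)
    (hQ : Q = L * D * Lᵀ) :
    (∀ i j, 0 ≤ L i j) ∧
    (∀ x : Fin n → ℝ, (∀ i, 0 ≤ x i) →
      ∀ m, 0 ≤ (fun i => L i m) ⬝ᵥ x) := by
  have hU : ∀ k m : Fin n, (D * Lᵀ) k m = D k k * L m k := by
    intro k m
    rw [Matrix.mul_apply, Finset.sum_eq_single k]
    · simp
    · intro t _ ht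
      rw [hD (Ne.symm ht), zero_mul]
    · intro h; exact absurd (Finset.mem_univ k) h
  have key : ∀ i j : Fin n, 0 ≤ L i j := by
    intro i j
    rcases lt_or_ge i j with hij | hij
    · exact le_of_eq (hL hij).symm
    · -- j ≤ i
      set N := j.val with hNdef
      have hN1 : N + 1 ≤ n := j.isLt
      set c : Fin (N + 1) → Fin n := Fin.castLE hN1 with hcdef
      set r : Fin (N + 1) → Fin n :=
        fun k => if h : k.val < N then ⟨k.val, lt_trans h j.isLt⟩ else i with hrdef
      have hc : StrictMono c := Fin.strictMono_castLE hN1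
      have hr : StrictMono r := by
        intro a b hab
        have hab' : a.val < b.val := hab
        by_cases hb : b.val < N
        · have ha : a.val < N := lt_trans hab' hb
          simp only [hrdef, dif_pos ha, dif_pos hb]
          exact hab'
        · have ha : a.val < N := by
            have hbN : b.val = N := le_antisymm (Nat.lt_succ_iff.mp b.isLt) (not_lt.mp hb)
            omega
          simp only [hrdef, dif_pos ha, dif_neg hb]
          show (⟨a.val, _⟩ : Fin n) < i
          have : a.val < i.val := lt_of_lt_of_le ha hij
          exact this
      have hsub : Q.submatrix r c = (L.submatrix r c) * ((D * Lᵀ).submatrix c c) := by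
        ext a b
        rw [Matrix.submatrix_apply, hQ, Matrix.mul_assoc, Matrix.mul_apply, Matrix.mul_apply]
        simp only [Matrix.submatrix_apply]
        rw [← Finset.sum_subset
          (Finset.subset_univ ((Finset.univ : Finset (Fin (N + 1))).map ⟨c, hc.injective⟩))]
        · rw [Finset.sum_map]; rfl
        · intro k _ hk
          have hkv : N + 1 ≤ k.val := by
            by_contra h
            push_neg at h
            exact hk (Finset.mem_map.mpr ⟨⟨k.val, h⟩, Finset.mem_univ _, Fin.ext rfl⟩)
          have hlt : c b < k := by
            show (c b).val < k.val
            have : (c b).val = b.val := rfl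
            omega
          have hz : L (c b) k = 0 := hL hlt
          rw [hU, hz, mul_zero, mul_zero]
      have hUdet : ((D * Lᵀ).submatrix c c).det = ∏ a : Fin (N + 1), D (c a) (c a) := by
        rw [Matrix.det_of_upperTriangular]
        · apply Finset.prod_congr rfl
          intro a _
          rw [Matrix.submatrix_apply, hU, hLdiag, mul_one]
        · intro a b hba
          have hba' : b < a := hba
          have hz : L (c b) (c a) = 0 := hL (hc hba')
          rw [Matrix.submatrix_apply, hU, hz, mul_zero]
      have hLdet : (L.submatrix r c).det = L i j := by
        rw [Matrix.det_of_lowerTriangular]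
        · rw [Finset.prod_eq_single (Fin.last N)]
          · have h1 : ¬ (Fin.last N).val < N := by simp
            have h2 : c (Fin.last N) = j := Fin.ext rfl
            simp only [Matrix.submatrix_apply, hrdef, dif_neg h1, h2]
          · intro a _ ha
            have haN : a.val < N := by
              rcases Nat.lt_succ_iff_lt_or_eq.mp a.isLt with h | h
              · exact h
              · exact absurd (Fin.ext h) ha
            have : r a = c a := by
              simp only [hrdef, dif_pos haN]
              exact Fin.ext rfl
            rw [Matrix.submatrix_apply, this, hLdiag]
          · intro h; exact absurd (Finset.mem_univ _) h
        · intro a b hab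
          have hab' : a < b := hab
          have haN : a.val < N := lt_of_lt_of_le hab' (Nat.lt_succ_iff.mp b.isLt)
          have hra : (r a).val = a.val := by simp [hrdef, haN]
          have hlt : r a < c b := by
            rw [Fin.lt_def, hra]
            exact hab'
          have hz : L (r a) (c b) = 0 := hL hlt
          rw [Matrix.submatrix_apply, hz]
      have hP : 0 < ∏ a : Fin (N + 1), D (c a) (c a) :=
        Finset.prod_pos fun a _ => hDpos _
      have h0 := hTN (N + 1) r c hr hc
      rw [hsub, Matrix.det_mul, hLdet, hUdet] at h0
      exact (mul_nonneg_iff_of_pos_right hP).mp h0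
  refine ⟨key, ?_⟩
  intro x hx m
  exact Finset.sum_nonneg fun i _ => mul_nonneg (key i m) (hx i)
end
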